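/- Let n and N be positive integers, let R > 0 and p > 1, and let Z_{ij} = R·U_{ij}, where the U_{ij} (1 ≤ i ≤ n, 1 ≤ j ≤ N) are i.i.d. random variables with probability density f(u) = (p + 1)u^p on [0, 1]. Let R̃₁ = max_{i,j} Z_{ij}. Then the mean squared error of R̃₁ as an estimator of R satisfies MSE(R̃₁) = E[(R̃₁ − R)²] = R²·2/((nN(p + 1) + 1)(nN(p + 1) + 2)). -/

import Mathlib

/-!
By independence, the maximum `M` of the `U_{ij}` satisfies `P(M ≤ t) = ∏ P(U_{ij} ≤ t) = t ^ c`
on `[0, 1]` with `c = nN(p + 1)`, so `M` again has the power law `c x^(c-1) dx` on `[0, 1]`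
(the Beta`(c, 1)` distribution). Since `R > 0`, `R̃₁ - R = R (M - 1)`, and against that density
`E[(M - 1)²] = c/(c + 2) - 2c/(c + 1) + 1 = 2/((c + 1)(c + 2))`.
-/

open MeasureTheory ProbabilityTheory Real

noncomputable def powerDensity (c : ℝ) : ℝ → ℝ :=
  (Set.Icc 0 1).indicator fun v => c * v ^ (c - 1)

noncomputable def powerLaw (c : ℝ) : Measure ℝ :=
  volume.withDensity fun u => ENNReal.ofReal (powerDensity c u)

section
variable {c : ℝ}

lemma integral_mul_rpow_sub_one (hc : 0 < c) (m : ℝ) :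
    ∫ x in (0 : ℝ)..m, c * x ^ (c - 1) = m ^ c := by
  rw [intervalIntegral.integral_const_mul, integral_rpow (Or.inl (by linarith)),
    sub_add_cancel, zero_rpow hc.ne']
  field_simp
  ring

lemma powerDensity_nonneg (hc : 0 ≤ c) (u : ℝ) : 0 ≤ powerDensity c u :=
  Set.indicator_nonneg (fun _ hv => mul_nonneg hc (rpow_nonneg hv.1 _)) u

lemma measurable_powerDensity (c : ℝ) : Measurable (powerDensity c) :=
  (measurable_const.mul (measurable_id.pow_const _)).indicator measurableSet_Icc

lemma integrable_powerDensity (hc : 0 < c) : Integrable (powerDensity c) := by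
  have h := (intervalIntegral.intervalIntegrable_rpow' (a := 0) (b := 1) (r := c - 1)
    (by linarith)).const_mul c
  rw [intervalIntegrable_iff_integrableOn_Icc_of_le zero_le_one] at h
  exact (integrable_indicator_iff measurableSet_Icc).2 h

lemma powerLaw_Iic (hc : 0 < c) (t : ℝ) :
    powerLaw c (Set.Iic t) = ENNReal.ofReal (min (max t 0) 1 ^ c) := by
  rw [powerLaw, withDensity_apply _ measurableSet_Iic,
    ← ofReal_integral_eq_lintegral_ofReal (integrable_powerDensity hc).integrableOn
      (Filter.Eventually.of_forall (powerDensity_nonneg hc.le)),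
    powerDensity, integral_indicator measurableSet_Icc, Measure.restrict_restrict measurableSet_Icc,
    ← Set.Ici_inter_Iic, Set.inter_assoc, Set.Iic_inter_Iic, Set.Ici_inter_Iic]
  rcases lt_or_ge t 0 with ht | ht
  · rw [Set.Icc_eq_empty (by simp [ht]), Measure.restrict_empty, integral_zero_measure,
      max_eq_right ht.le, min_eq_left zero_le_one, zero_rpow hc.ne']
  · rw [integral_Icc_eq_integral_Ioc, ← intervalIntegral.integral_of_le (le_min zero_le_one ht),
      integral_mul_rpow_sub_one hc, max_eq_left ht, min_comm]

lemma integral_mul_rpow_sub_one_mul_sq_sub_one (hc : 0 < c) :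
    ∫ x in (0 : ℝ)..1, c * x ^ (c - 1) * (x - 1) ^ 2 = 2 / ((c + 1) * (c + 2)) := by
  have hexpand : Set.EqOn (fun x : ℝ => c * x ^ (c - 1) * (x - 1) ^ 2)
      (fun x => c * x ^ (c + 1) - 2 * c * x ^ c + c * x ^ (c - 1)) (Set.uIcc 0 1) := by
    intro x hx
    have hx0 : 0 ≤ x := by simpa using hx.1
    have h2 : x ^ (c + 1) = x ^ (c - 1) * x ^ 2 := by
      rw [← rpow_add_natCast' hx0 (by push_cast; linarith)]; congr 1; push_cast; ring
    have h1 : x ^ c = x ^ (c - 1) * x := by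
      rw [← rpow_add_one' hx0 (by linarith), sub_add_cancel]
    simp only [h1, h2]
    ring
  have hint : ∀ r : ℝ, -1 < r → IntervalIntegrable (fun x : ℝ => x ^ r) volume 0 1 :=
    fun r hr => intervalIntegral.intervalIntegrable_rpow' hr
  rw [intervalIntegral.integral_congr hexpand,
    intervalIntegral.integral_add (((hint _ (by linarith)).const_mul _).sub
      ((hint _ (by linarith)).const_mul _)) ((hint _ (by linarith)).const_mul _),
    intervalIntegral.integral_sub ((hint _ (by linarith)).const_mul _)
      ((hint _ (by linarith)).const_mul _)]
  simp only [intervalIntegral.integral_const_mul]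
  rw [integral_rpow (Or.inl (by linarith)), integral_rpow (Or.inl (by linarith)),
    integral_rpow (Or.inl (by linarith))]
  simp only [one_rpow, sub_add_cancel]
  rw [zero_rpow (by linarith), zero_rpow (by linarith), zero_rpow (by linarith)]
  field_simp
  ring

lemma integral_sq_sub_one_powerLaw (hc : 0 < c) :
    ∫ x, (x - 1) ^ 2 ∂powerLaw c = 2 / ((c + 1) * (c + 2)) := by
  rw [powerLaw, integral_withDensity_eq_integral_toReal_smul
    (measurable_powerDensity c).ennreal_ofReal
    (Filter.Eventually.of_forall fun _ => ENNReal.ofReal_lt_top)]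
  simp only [ENNReal.toReal_ofReal (powerDensity_nonneg hc.le _), smul_eq_mul]
  simp only [powerDensity, ← Set.indicator_mul_left (g := fun x : ℝ => (x - 1) ^ 2)]
  rw [integral_indicator measurableSet_Icc, integral_Icc_eq_integral_Ioc,
    ← intervalIntegral.integral_of_le zero_le_one, integral_mul_rpow_sub_one_mul_sq_sub_one hc]

end

lemma ProbabilityTheory.iIndepFun.measure_iSup_le {ι Ω β : Type*} [Fintype ι] [Nonempty ι]
    [MeasurableSpace Ω] {μ : Measure Ω} [ConditionallyCompleteLinearOrder β] [TopologicalSpace β]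
    [OrderClosedTopology β] [MeasurableSpace β] [OpensMeasurableSpace β] {X : ι → Ω → β}
    (h : iIndepFun X μ) (t : β) :
    μ ((fun ω => ⨆ i, X i ω) ⁻¹' Set.Iic t) = ∏ i, μ (X i ⁻¹' Set.Iic t) := by
  have hpre : (fun ω => ⨆ i, X i ω) ⁻¹' Set.Iic t = ⋂ i ∈ Finset.univ, X i ⁻¹' Set.Iic t := by
    ext ω
    simp [ciSup_le_iff (Set.finite_range _).bddAbove]
  rw [hpre, h.measure_inter_preimage_eq_mul _ (fun _ _ => measurableSet_Iic)]

lemma map_iSup_eq_powerLaw {ι Ω : Type*} [Fintype ι] [Nonempty ι] [MeasurableSpace Ω]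
    {μ : Measure Ω} [IsFiniteMeasure μ] {X : ι → Ω → ℝ} {c : ℝ} (hc : 0 < c)
    (hX : ∀ i, Measurable (X i)) (hlaw : ∀ i, μ.map (X i) = powerLaw c) (hind : iIndepFun X μ) :
    μ.map (fun ω => ⨆ i, X i ω) = powerLaw (Fintype.card ι * c) := by
  refine Measure.ext_of_Iic _ _ fun t => ?_
  have hclamp : 0 ≤ min (max t 0) 1 := le_min (le_max_right t 0) zero_le_one
  have hfactor : ∀ i, μ (X i ⁻¹' Set.Iic t) = ENNReal.ofReal (min (max t 0) 1 ^ c) := fun i => by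
    rw [← Measure.map_apply (hX i) measurableSet_Iic, hlaw i, powerLaw_Iic hc]
  rw [Measure.map_apply (Measurable.iSup hX) measurableSet_Iic, hind.measure_iSup_le,
    powerLaw_Iic (by positivity)]
  simp only [hfactor, Finset.prod_const, Finset.card_univ]
  rw [← ENNReal.ofReal_pow (rpow_nonneg hclamp _), ← rpow_natCast, ← rpow_mul hclamp, mul_comm]

/-- If `U_{ij}` are i.i.d. with density `f(u) = (p+1)u^p` on `[0,1]` and `Z_{ij} = R·U_{ij}`,
then the MSE of the maximum `R̃₁ = max Z_{ij}` as an estimator of `R` equals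
`R²·2/((nN(p+1)+1)(nN(p+1)+2))`. -/
theorem mse_max_power_density
    {Ω : Type*} [MeasureSpace Ω] [IsProbabilityMeasure (ℙ : Measure Ω)]
    (n N : ℕ) (hn : 0 < n) (hN : 0 < N) (R p : ℝ) (hR : 0 < R) (hp : 1 < p)
    (U : Fin n × Fin N → Ω → ℝ)
    (hmeas : ∀ ij, Measurable (U ij))
    (hlaw : ∀ ij, Measure.map (U ij) ℙ =
      volume.withDensity
        (fun u => ENNReal.ofReal ((Set.Icc (0 : ℝ) 1).indicator (fun v => (p + 1) * v ^ p) u)))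
    (hindep : iIndepFun U ℙ) :
    ∫ ω, ((⨆ ij, R * U ij ω) - R) ^ 2 ∂ℙ =
      R ^ 2 * (2 / (((n : ℝ) * N * (p + 1) + 1) * ((n : ℝ) * N * (p + 1) + 2))) := by
  have : Nonempty (Fin n) := ⟨⟨0, hn⟩⟩
  have : Nonempty (Fin N) := ⟨⟨0, hN⟩⟩
  have hp1 : 0 < p + 1 := by linarith
  have hlaw' : ∀ ij, Measure.map (U ij) ℙ = powerLaw (p + 1) := by
    simpa only [powerLaw, powerDensity, add_sub_cancel_right] using hlaw
  have hmax : Measure.map (fun ω => ⨆ ij, U ij ω) ℙ = powerLaw (n * N * (p + 1)) := by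
    rw [map_iSup_eq_powerLaw hp1 hmeas hlaw' hindep]
    simp only [Fintype.card_prod, Fintype.card_fin, Nat.cast_mul]
  calc ∫ ω, ((⨆ ij, R * U ij ω) - R) ^ 2 ∂ℙ = R ^ 2 * ∫ ω, ((⨆ ij, U ij ω) - 1) ^ 2 ∂ℙ := by
        rw [← integral_const_mul]
        congr with ω
        rw [← mul_iSup_of_nonneg hR.le]
        ring
    _ = R ^ 2 * ∫ x, (x - 1) ^ 2 ∂powerLaw (n * N * (p + 1)) := by
        rw [← hmax, integral_map (Measurable.iSup hmeas).aemeasurable (by fun_prop)]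
    _ = _ := by rw [integral_sq_sub_one_powerLaw (by positivity)]
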